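/- Let P be a finite set of points in the plane, not all collinear, whose convex hull is a triangle with vertices among P, and which has exactly 3 internal points a, b, c such that conv{a,b,c} is a triangle containing no other point of P, and such that each convex hull vertex of P sees exactly two of a, b, c as extreme points of conv(P minus that vertex). Then in every triangulation T of P, each convex hull vertex p of P is joined in T to the two internal points among a, b, c that are extreme points of conv(P \ {p}). -/

import Mathlib

open Set

/-- Points of the plane. -/
abbrev Pt : Type := ℝ × ℝ

noncomputable section

/-- The determinant of two plane vectors. -/
def det2 (u v : Pt) : ℝ := u.1 * v.2 - u.2 * v.1

/-- A triple `(a,b,c)` of points is clockwise-ordered if `det (b-a, c-a) < 0`. -/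
def Clockwise (a b c : Pt) : Prop := det2 (b - a) (c - a) < 0

/-- The closed segments `[a,b]` and `[c,d]` cross: they intersect in a point that is not a
common endpoint of the two segments. -/
def Crosses (a b c d : Pt) : Prop :=
  ∃ x : Pt, x ∈ segment ℝ a b ∧ x ∈ segment ℝ c d ∧
    ¬((x = a ∨ x = b) ∧ (x = c ∨ x = d))

/-- `T` is a set of unordered pairs of distinct points of `P` whose corresponding
segments are pairwise non-crossing. -/
def ValidSegs (P : Finset Pt) (T : Set (Sym2 Pt)) : Prop :=
  (∀ e ∈ T, ∃ a b : Pt, a ∈ P ∧ b ∈ P ∧ a ≠ b ∧ e = s(a, b)) ∧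
  (∀ a b c d : Pt, s(a, b) ∈ T → s(c, d) ∈ T → s(a, b) ≠ s(c, d) → ¬ Crosses a b c d)

/-- A triangulation of `P`: a maximal (w.r.t. inclusion) set of unordered pairs of distinct
points of `P`, no two of whose segments cross. -/
def IsTriangulation (P : Finset Pt) (T : Set (Sym2 Pt)) : Prop :=
  ValidSegs P T ∧ ∀ T' : Set (Sym2 Pt), ValidSegs P T' → T ⊆ T' → T' = T

/-- A convex hull point of `P`: a point of `P` on the boundary of `conv P`. -/
def HullPoint (P : Finset Pt) (p : Pt) : Prop :=
  p ∈ P ∧ p ∈ frontier (convexHull ℝ (P : Set Pt))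

/-- An internal point of `P`: a point of `P` in the interior of `conv P`. -/
def InternalPoint (P : Finset Pt) (p : Pt) : Prop :=
  p ∈ P ∧ p ∈ interior (convexHull ℝ (P : Set Pt))

/-- The number of convex hull points of `P`. -/
def hullCount (P : Finset Pt) : ℕ := {p : Pt | HullPoint P p}.ncard

/-- The number of internal points of `P`. -/
def internalCount (P : Finset Pt) : ℕ := {p : Pt | InternalPoint P p}.ncard

/-- The open triangle with vertices `a`, `b`, `c`. -/
def openTriangle (a b c : Pt) : Set Pt := interior (convexHull ℝ ({a, b, c} : Set Pt))

/-- `(a,b,c)` is a triangle of the triangulation `T` of `P`: the three points are distinct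
points of `P`, the three pairs are in `T`, and the open triangle `abc` contains no point of
`P` and meets no segment of `T`. -/
def IsTriangleOf (P : Finset Pt) (T : Set (Sym2 Pt)) (a b c : Pt) : Prop :=
  a ∈ P ∧ b ∈ P ∧ c ∈ P ∧ a ≠ b ∧ b ≠ c ∧ a ≠ c ∧
  s(a, b) ∈ T ∧ s(b, c) ∈ T ∧ s(a, c) ∈ T ∧
  (∀ p ∈ P, p ∉ openTriangle a b c) ∧
  (∀ u v : Pt, s(u, v) ∈ T → ∀ x ∈ segment ℝ u v, x ∉ openTriangle a b c)

/-- Triangulations `TP` of `P` and `TQ` of `Q` are compatible via the bijection `φ : P → Q`: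
`(a,b,c)` is a clockwise-ordered triangle of `TP` iff `(φ a, φ b, φ c)` is a
clockwise-ordered triangle of `TQ`. -/
def CompatibleVia (P Q : Finset Pt) (TP TQ : Set (Sym2 Pt)) (φ : Pt → Pt) : Prop :=
  Set.BijOn φ (P : Set Pt) (Q : Set Pt) ∧
  ∀ a b c : Pt, a ∈ P → b ∈ P → c ∈ P →
    ((IsTriangleOf P TP a b c ∧ Clockwise a b c) ↔
     (IsTriangleOf Q TQ (φ a) (φ b) (φ c) ∧ Clockwise (φ a) (φ b) (φ c)))

/-- Triangulations `TP` of `P` and `TQ` of `Q` are compatible. -/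
def Compatible (P Q : Finset Pt) (TP TQ : Set (Sym2 Pt)) : Prop :=
  ∃ φ : Pt → Pt, CompatibleVia P Q TP TQ φ

/-- The degree of a point `p` in a triangulation `T`: the number of pairs of `T`
containing `p`. -/
def degreeIn (T : Set (Sym2 Pt)) (p : Pt) : ℕ := {e ∈ T | p ∈ e}.ncard

/-- `P` is in general position: no three points of `P` are collinear. -/
def GenPos (P : Finset Pt) : Prop :=
  ∀ a b c : Pt, a ∈ P → b ∈ P → c ∈ P → a ≠ b → b ≠ c → a ≠ c →
    ¬ Collinear ℝ ({a, b, c} : Set Pt)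

end

namespace Aux14

def rot (w : Pt) : Pt := (-w.2, w.1)

lemma det2_combo (w p q o : Pt) (α β : ℝ) (hαβ : α + β = 1) :
    det2 w (α • p + β • q - o) = α * det2 w (p - o) + β * det2 w (q - o) := by
  simp only [det2, Prod.fst_add, Prod.snd_add, Prod.smul_fst, Prod.smul_snd,
    Prod.fst_sub, Prod.snd_sub, smul_eq_mul]
  linear_combination (w.1 * o.2 - w.2 * o.1) * hαβ

/-- helper: bilinearity of det2 in second argument -/
lemma det2_add_right (w u v : Pt) : det2 w (u + v) = det2 w u + det2 w v := by
  simp only [det2, Prod.fst_add, Prod.snd_add]; ring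

lemma det2_smul_right (w u : Pt) (c : ℝ) : det2 w (c • u) = c * det2 w u := by
  simp only [det2, Prod.smul_fst, Prod.smul_snd, smul_eq_mul]; ring

lemma det2_smul_left (w u : Pt) (c : ℝ) : det2 (c • w) u = c * det2 w u := by
  simp only [det2, Prod.smul_fst, Prod.smul_snd, smul_eq_mul]; ring

lemma interior_no_max (s : Set Pt) (y w : Pt) (hy : y ∈ interior s) (hw : w ≠ 0)
    (h : ∀ p ∈ s, det2 w (p - y) ≤ 0) : False := by
  obtain ⟨ε, hε, hball⟩ := Metric.isOpen_iff.1 isOpen_interior y hy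
  have hww : 0 < w.1 ^ 2 + w.2 ^ 2 := by
    rcases eq_or_ne w.1 0 with h1 | h1
    · have h2 : w.2 ≠ 0 := fun h2 => hw (Prod.ext_iff.2 ⟨h1, h2⟩)
      positivity
    · positivity
  have hwn : (0:ℝ) < ‖rot w‖ := by
    rw [norm_pos_iff]
    intro hc
    rw [Prod.ext_iff] at hc
    simp only [rot, Prod.fst_zero, Prod.snd_zero, neg_eq_zero] at hc
    exact hw (Prod.ext_iff.2 ⟨hc.2, hc.1⟩)
  set δ : ℝ := ε / (2 * ‖rot w‖) with hδ
  have hδpos : 0 < δ := by positivity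
  have hmem : y + δ • rot w ∈ s := by
    apply interior_subset
    apply hball
    simp only [Metric.mem_ball, dist_eq_norm]
    have h0 : y + δ • rot w - y = δ • rot w := by abel
    rw [h0, norm_smul, Real.norm_eq_abs, abs_of_pos hδpos, hδ]
    rw [div_mul_eq_mul_div, div_lt_iff₀ (by positivity)]
    nlinarith
  have hle := h _ hmem
  have hcalc : det2 w (y + δ • rot w - y) = δ * (w.1 ^ 2 + w.2 ^ 2) := by
    have h0 : y + δ • rot w - y = δ • rot w := by abel
    rw [h0]
    simp only [det2, rot, Prod.smul_fst, Prod.smul_snd, smul_eq_mul]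
    ring
  rw [hcalc] at hle
  nlinarith

lemma convexHull_det_le (S : Set Pt) (w o : Pt) (r : ℝ)
    (h : ∀ p ∈ S, det2 w (p - o) ≤ r) : ∀ p ∈ convexHull ℝ S, det2 w (p - o) ≤ r := by
  have hconv : Convex ℝ {p : Pt | det2 w (p - o) ≤ r} := by
    intro p hp q hq α β hα hβ hαβ
    simp only [mem_setOf_eq] at *
    rw [det2_combo w p q o α β hαβ]
    have h1 := mul_le_mul_of_nonneg_left hp hα
    have h2 := mul_le_mul_of_nonneg_left hq hβ
    have h3 : α * r + β * r = r := by linear_combination r * hαβ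
    linarith
  exact fun p hp => convexHull_min (fun q hq => h q hq) hconv hp

lemma collinear_of_det2 {A B C : Pt} (h : det2 (B - A) (C - A) = 0) :
    Collinear ℝ ({A, B, C} : Set Pt) := by
  rcases eq_or_ne B A with hBA | hBA
  · subst hBA
    rw [Set.insert_idem]
    exact collinear_pair ℝ B C
  · rw [collinear_iff_of_mem (Set.mem_insert A {B, C})]
    refine ⟨B - A, fun p hp => ?_⟩
    have key : ∀ q : Pt, det2 (B - A) (q - A) = 0 → ∃ t : ℝ, q = t • (B - A) +ᵥ A := by
      intro q hq
      simp only [det2, Prod.fst_sub, Prod.snd_sub] at hq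
      rcases eq_or_ne (B.1 - A.1) 0 with h1 | h1
      · have h2 : B.2 - A.2 ≠ 0 := by
          intro h2
          apply hBA
          rw [Prod.ext_iff]
          constructor <;> [linarith; linarith]
        refine ⟨(q.2 - A.2) / (B.2 - A.2), ?_⟩
        rw [Prod.ext_iff]
        constructor
        · show q.1 = (q.2 - A.2) / (B.2 - A.2) * (B.1 - A.1) + A.1
          rw [h1, mul_zero, zero_add]
          have h0 : (B.1 - A.1) * (q.2 - A.2) = 0 := by rw [h1]; ring
          have : (B.2 - A.2) * (q.1 - A.1) = 0 := by linarith
          have := mul_eq_zero.1 this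
          rcases this with h' | h'
          · exact absurd h' h2
          · linarith
        · show q.2 = (q.2 - A.2) / (B.2 - A.2) * (B.2 - A.2) + A.2
          field_simp
          ring
      · refine ⟨(q.1 - A.1) / (B.1 - A.1), ?_⟩
        rw [Prod.ext_iff]
        constructor
        · show q.1 = (q.1 - A.1) / (B.1 - A.1) * (B.1 - A.1) + A.1
          field_simp
          ring
        · show q.2 = (q.1 - A.1) / (B.1 - A.1) * (B.2 - A.2) + A.2
          have key2 : q.2 - A.2 = (q.1 - A.1) / (B.1 - A.1) * (B.2 - A.2) := by
            rw [div_mul_eq_mul_div, eq_div_iff h1]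
            linear_combination hq
          linarith
    simp only [Set.mem_insert_iff, Set.mem_singleton_iff] at hp
    rcases hp with rfl | rfl | rfl
    · exact ⟨0, by simp⟩
    · exact key p (by simp only [det2, Prod.fst_sub, Prod.snd_sub]; ring)
    · exact key p h

lemma det2_ne_of_not_collinear {A B C : Pt} (h : ¬ Collinear ℝ ({A, B, C} : Set Pt)) :
    det2 (B - A) (C - A) ≠ 0 :=
  fun h0 => h (collinear_of_det2 h0)

/-- A vertex of a nondegenerate triangle is not in the interior of its hull. -/
lemma vertex_not_interior {A B C : Pt} (h : ¬ Collinear ℝ ({A, B, C} : Set Pt)) :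
    A ∉ interior (convexHull ℝ ({A, B, C} : Set Pt)) := by
  intro hA
  -- use functional det2 W (· - A) with W = d • (C - B) where d = det2 (C - B) (A - B)
  set d : ℝ := det2 (C - B) (A - B) with hd
  have hdne : d ≠ 0 := by
    have h' : ¬ Collinear ℝ ({B, C, A} : Set Pt) := by
      intro hc; apply h
      have : ({B, C, A} : Set Pt) = {A, B, C} := by
        ext p; simp [Set.mem_insert_iff]; tauto
      rwa [this] at hc
    exact det2_ne_of_not_collinear h'
  set W : Pt := d • (C - B) with hW
  have hWne : W ≠ 0 := by
    rw [hW]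
    intro hc
    rcases smul_eq_zero.1 hc with hc | hc
    · exact hdne hc
    · rw [sub_eq_zero] at hc
      apply h
      have hset : ({A, B, C} : Set Pt) = {A, B} := by rw [hc]; simp
      rw [hset]
      exact collinear_pair ℝ A B
  have hbound : ∀ p ∈ ({A, B, C} : Set Pt), det2 W (p - A) ≤ 0 := by
    intro p hp
    rcases hp with rfl | rfl | rfl
    · simp [det2]
    · have hfin : det2 W (p - A) = - d ^ 2 := by
        simp only [hW, det2_smul_left, hd]
        simp only [det2, Prod.fst_sub, Prod.snd_sub]
        ring
      rw [hfin]
      nlinarith [sq_nonneg d]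
    · have hfin : det2 W (p - A) = - d ^ 2 := by
        simp only [hW, det2_smul_left, hd]
        simp only [det2, Prod.fst_sub, Prod.snd_sub]
        ring
      rw [hfin]
      nlinarith [sq_nonneg d]
  exact interior_no_max _ A W hA hWne
    (fun p hp => convexHull_det_le _ W A 0 hbound p hp)

/-- A point strictly inside an edge of a nondegenerate triangle is not interior. -/
lemma openSegment_not_interior {A B C x : Pt} (h : ¬ Collinear ℝ ({A, B, C} : Set Pt))
    (hx : x ∈ openSegment ℝ A B) :
    x ∉ interior (convexHull ℝ ({A, B, C} : Set Pt)) := by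
  intro hxi
  obtain ⟨α, β, hα, hβ, hαβ, hcombo⟩ := hx
  set d : ℝ := det2 (B - A) (C - A) with hd
  have hdne : d ≠ 0 := det2_ne_of_not_collinear h
  set W : Pt := (-d) • (B - A) with hW
  have hABne : B - A ≠ 0 := by
    intro hc
    rw [sub_eq_zero] at hc
    apply h
    have hset : ({A, B, C} : Set Pt) = {A, C} := by rw [← hc]; simp
    rw [hset]
    exact collinear_pair ℝ A C
  have hWne : W ≠ 0 := by
    rw [hW]
    intro hc
    rcases smul_eq_zero.1 hc with hc | hc
    · exact hdne (neg_eq_zero.1 hc)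
    · exact hABne hc
  have hc1 : α * A.1 + β * B.1 = x.1 := by
    have := congrArg Prod.fst hcombo
    simpa [Prod.smul_fst, smul_eq_mul] using this
  have hc2 : α * A.2 + β * B.2 = x.2 := by
    have := congrArg Prod.snd hcombo
    simpa [Prod.smul_snd, smul_eq_mul] using this
  have hpar : det2 W (A - B) = 0 := by
    rw [hW]
    simp only [det2, Prod.smul_fst, Prod.smul_snd, smul_eq_mul, Prod.fst_sub, Prod.snd_sub]
    ring
  have hbound : ∀ p ∈ ({A, B, C} : Set Pt), det2 W (p - x) ≤ 0 := by
    intro p hp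
    rcases hp with rfl | rfl | rfl
    · have hvec : p - x = β • (p - B) := by
        rw [Prod.ext_iff]
        constructor
        · simp only [Prod.fst_sub, Prod.smul_fst, smul_eq_mul]
          linear_combination (-p.1) * hαβ + hc1
        · simp only [Prod.snd_sub, Prod.smul_snd, smul_eq_mul]
          linear_combination (-p.2) * hαβ + hc2
      rw [hvec, det2_smul_right, hpar, mul_zero]
    · have hvec : p - x = α • (p - A) := by
        rw [Prod.ext_iff]
        constructor
        · simp only [Prod.fst_sub, Prod.smul_fst, smul_eq_mul]
          linear_combination (-p.1) * hαβ + hc1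
        · simp only [Prod.snd_sub, Prod.smul_snd, smul_eq_mul]
          linear_combination (-p.2) * hαβ + hc2
      have hpar2 : det2 W (p - A) = 0 := by
        rw [hW]
        simp only [det2, Prod.smul_fst, Prod.smul_snd, smul_eq_mul, Prod.fst_sub, Prod.snd_sub]
        ring
      rw [hvec, det2_smul_right, hpar2, mul_zero]
    · have hvec : p - x = (p - A) + β • (A - B) := by
        rw [Prod.ext_iff]
        constructor
        · simp only [Prod.fst_sub, Prod.fst_add, Prod.smul_fst, smul_eq_mul]
          linear_combination (-A.1) * hαβ + hc1
        · simp only [Prod.snd_sub, Prod.snd_add, Prod.smul_snd, smul_eq_mul]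
          linear_combination (-A.2) * hαβ + hc2
      rw [hvec, det2_add_right, det2_smul_right, hpar, mul_zero, add_zero]
      have hfin : det2 W (p - A) = - d ^ 2 := by
        simp only [hW, det2_smul_left, hd]
        ring
      rw [hfin]; nlinarith [sq_nonneg d]
  exact interior_no_max _ x W hxi hWne
    (fun p hp => convexHull_det_le _ W x 0 hbound p hp)

lemma combo3_mem {A B C : Pt} {a b c : ℝ} (ha : 0 ≤ a) (hb : 0 ≤ b) (hc : 0 ≤ c)
    (habc : a + b + c = 1) : a • A + b • B + c • C ∈ convexHull ℝ ({A, B, C} : Set Pt) := by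
  have hA : A ∈ convexHull ℝ ({A, B, C} : Set Pt) := subset_convexHull ℝ _ (by simp)
  have hB : B ∈ convexHull ℝ ({A, B, C} : Set Pt) := subset_convexHull ℝ _ (by simp)
  have hC : C ∈ convexHull ℝ ({A, B, C} : Set Pt) := subset_convexHull ℝ _ (by simp)
  have hcx := convex_convexHull ℝ ({A, B, C} : Set Pt)
  rcases eq_or_lt_of_le (by linarith : a + b ≤ 1) with h1 | h1
  · -- c = 0
    have hc0 : c = 0 := by linarith
    subst hc0
    simp only [zero_smul, add_zero]
    exact hcx hA hB ha hb h1
  · rcases eq_or_ne (a + b) 0 with h0 | h0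
    · have ha0 : a = 0 := by linarith
      have hb0 : b = 0 := by linarith
      have hc1 : c = 1 := by linarith
      subst ha0; subst hb0; subst hc1
      simpa using hC
    · have hab : 0 < a + b := lt_of_le_of_ne (by linarith) (Ne.symm h0)
      set m : Pt := (a / (a + b)) • A + (b / (a + b)) • B with hm
      have hmmem : m ∈ convexHull ℝ ({A, B, C} : Set Pt) := by
        apply hcx hA hB (by positivity) (by positivity)
        field_simp
      have hfinal : a • A + b • B + c • C = (a + b) • m + c • C := by
        rw [hm, smul_add, smul_smul, smul_smul]
        rw [mul_div_cancel₀ _ (ne_of_gt hab), mul_div_cancel₀ _ (ne_of_gt hab)]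
      rw [hfinal]
      exact hcx hmmem hC (le_of_lt hab) hc habc

lemma bary_exists {A B C y : Pt} (hy : y ∈ convexHull ℝ ({A, B, C} : Set Pt)) :
    ∃ p₁ p₂ p₃ : ℝ, 0 ≤ p₁ ∧ 0 ≤ p₂ ∧ 0 ≤ p₃ ∧ p₁ + p₂ + p₃ = 1 ∧
      p₁ • A + p₂ • B + p₃ • C = y := by
  rw [convexHull_insert (by simp : ({B, C} : Set Pt).Nonempty)] at hy
  rw [mem_convexJoin] at hy
  obtain ⟨A', hA', z, hz, hyz⟩ := hy
  rw [mem_singleton_iff] at hA'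
  subst hA'
  rw [convexHull_pair] at hz
  obtain ⟨b, c, hb, hc, hbc, hzeq⟩ := hz
  obtain ⟨s, t, hs, ht, hst, hyeq⟩ := hyz
  refine ⟨s, t * b, t * c, hs, by positivity, by positivity, by nlinarith, ?_⟩
  rw [← hyeq, ← hzeq]
  rw [smul_add, smul_smul, smul_smul]
  abel

lemma extreme_notin_hull3 {S : Set Pt} {x A B C : Pt}
    (hx : x ∈ Set.extremePoints ℝ (convexHull ℝ S))
    (hA : A ∈ S) (hB : B ∈ S) (hC : C ∈ S)
    (hAx : A ≠ x) (hBx : B ≠ x) (hCx : C ≠ x) :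
    x ∉ convexHull ℝ ({A, B, C} : Set Pt) := by
  intro hmem
  obtain ⟨p₁, p₂, p₃, h1, h2, h3, hsum, hcombo⟩ := bary_exists hmem
  have hAK : A ∈ convexHull ℝ S := subset_convexHull ℝ _ hA
  have hBK : B ∈ convexHull ℝ S := subset_convexHull ℝ _ hB
  have hCK : C ∈ convexHull ℝ S := subset_convexHull ℝ _ hC
  rw [mem_extremePoints] at hx
  rcases lt_or_eq_of_le h1 with h1p | h1z
  · rcases eq_or_lt_of_le (by linarith : p₁ ≤ 1) with h1e | h1l
    · -- p₁ = 1, x = A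
      have : p₂ = 0 ∧ p₃ = 0 := ⟨by linarith, by linarith⟩
      apply hAx
      rw [← hcombo, this.1, this.2, h1e]
      simp
    · -- 0 < p₁ < 1 : x ∈ openSegment A m
      have hrest : 0 < p₂ + p₃ := by linarith
      set m : Pt := (p₂ / (p₂ + p₃)) • B + (p₃ / (p₂ + p₃)) • C with hm
      have hmK : m ∈ convexHull ℝ S := by
        apply (convex_convexHull ℝ S) hBK hCK (by positivity) (by positivity)
        field_simp
      have hxseg : x ∈ openSegment ℝ A m := by
        refine ⟨p₁, p₂ + p₃, h1p, hrest, by linarith, ?_⟩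
        rw [hm, smul_add, smul_smul, smul_smul,
          mul_div_cancel₀ _ (ne_of_gt hrest), mul_div_cancel₀ _ (ne_of_gt hrest),
          ← add_assoc]
        exact hcombo
      exact hAx ((hx.2 A hAK m hmK hxseg).1)
  · -- p₁ = 0
    rcases lt_or_eq_of_le h2 with h2p | h2z
    · rcases eq_or_lt_of_le (by linarith : p₂ ≤ 1) with h2e | h2l
      · apply hBx
        rw [← hcombo, ← h1z, h2e, show p₃ = 0 by linarith]
        simp
      · have h3p : 0 < p₃ := by linarith
        have hxseg : x ∈ openSegment ℝ B C := by
          refine ⟨p₂, p₃, h2p, h3p, by linarith, ?_⟩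
          rw [← hcombo, ← h1z]
          simp
        exact hBx ((hx.2 B hBK C hCK hxseg).1)
    · apply hCx
      rw [← hcombo, ← h1z, ← h2z, show p₃ = 1 by linarith]
      simp

/-- Visibility: the segment from `v` to an extreme point `x` of `convexHull S`
meets `convexHull S` only in `x`, provided `x` is interior to `convexHull (insert v S)`. -/
lemma visible {v x : Pt} {S : Set Pt} (hSne : S.Nonempty)
    (hxint : x ∈ interior (convexHull ℝ (insert v S)))
    (hext : x ∈ Set.extremePoints ℝ (convexHull ℝ S))
    (hvx : x ≠ v) :
    ∀ z ∈ convexHull ℝ S, z ∈ segment ℝ v x → z = x := by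
  intro z hzK hzseg
  obtain ⟨a, b, ha, hb, hab, hzeq⟩ := hzseg
  rcases eq_or_lt_of_le ha with ha0 | ha0
  · rw [← hzeq, ← ha0, show b = 1 by linarith]
    simp
  · obtain ⟨ε', hε', hball⟩ := Metric.isOpen_iff.1 isOpen_interior x hxint
    have hxv : x - v ≠ 0 := sub_ne_zero.2 hvx
    have hnxv : (0:ℝ) < ‖x - v‖ := by rwa [norm_pos_iff]
    set ε : ℝ := ε' / (2 * ‖x - v‖) with hε
    have hεpos : 0 < ε := by positivity
    have hεlt : ε * ‖x - v‖ < ε' := by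
      rw [hε, div_mul_eq_mul_div, div_lt_iff₀ (by positivity)]
      nlinarith
    clear_value ε
    have hwmem : x + ε • (x - v) ∈ convexHull ℝ (insert v S) := by
      apply interior_subset
      apply hball
      simp only [Metric.mem_ball, dist_eq_norm]
      have h0 : x + ε • (x - v) - x = ε • (x - v) := by abel
      rw [h0, norm_smul, Real.norm_eq_abs, abs_of_pos hεpos]
      exact hεlt
    rw [convexHull_insert hSne, mem_convexJoin] at hwmem
    obtain ⟨v'', hv'', k, hk, hwseg⟩ := hwmem
    rw [mem_singleton_iff] at hv''
    rw [hv''] at hwseg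
    obtain ⟨s, s', hs, hs', hss', hweq⟩ := hwseg
    have hw1 : s * v.1 + s' * k.1 = x.1 + ε * (x.1 - v.1) := by
      have := congrArg Prod.fst hweq
      simpa [Prod.smul_fst, smul_eq_mul] using this
    have hw2 : s * v.2 + s' * k.2 = x.2 + ε * (x.2 - v.2) := by
      have := congrArg Prod.snd hweq
      simpa [Prod.smul_snd, smul_eq_mul] using this
    have hz1 : a * v.1 + b * x.1 = z.1 := by
      have := congrArg Prod.fst hzeq
      simpa [Prod.smul_fst, smul_eq_mul] using this
    have hz2 : a * v.2 + b * x.2 = z.2 := by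
      have := congrArg Prod.snd hzeq
      simpa [Prod.smul_snd, smul_eq_mul] using this
    have hs'pos : 0 < s' := by
      rcases eq_or_lt_of_le hs' with h0 | h0
      · exfalso
        have hs1 : s = 1 := by linarith
        rw [hs1, ← h0] at hw1 hw2
        have ht1 : (1 + ε) * (x.1 - v.1) = 0 := by linear_combination -hw1
        have ht2 : (1 + ε) * (x.2 - v.2) = 0 := by linear_combination -hw2
        have h1ε : (1 + ε) ≠ 0 := by positivity
        apply hvx
        rw [Prod.ext_iff]
        constructor
        · have := (mul_eq_zero.1 ht1).resolve_left h1ε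
          linarith [sub_eq_zero.1 this]
        · have := (mul_eq_zero.1 ht2).resolve_left h1ε
          linarith [sub_eq_zero.1 this]
      · exact h0
    set D : ℝ := a * (1 + ε) + (s + ε) * b with hD
    clear_value D
    have hDpos : 0 < D := by
      have : 0 < a * (1 + ε) := by positivity
      nlinarith
    by_contra hzx
    have hxopen : x ∈ openSegment ℝ z k := by
      refine ⟨(s + ε) / D, a * s' / D, by positivity, by positivity, ?_, ?_⟩
      · rw [← add_div, div_eq_one_iff_eq (ne_of_gt hDpos), hD]
        linear_combination (-(s + ε)) * hab + a * hss'
      · rw [Prod.ext_iff]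
        simp only [Prod.smul_fst, Prod.smul_snd, Prod.fst_add, Prod.snd_add, smul_eq_mul]
        constructor
        · rw [div_mul_eq_mul_div, div_mul_eq_mul_div, ← add_div,
            div_eq_iff (ne_of_gt hDpos)]
          linear_combination (-(s + ε)) * hz1 + a * hw1 - x.1 * hD
        · rw [div_mul_eq_mul_div, div_mul_eq_mul_div, ← add_div,
            div_eq_iff (ne_of_gt hDpos)]
          linear_combination (-(s + ε)) * hz2 + a * hw2 - x.2 * hD
    rw [mem_extremePoints] at hext
    exact hzx ((hext.2 z hzK k hk hxopen).1)

/-- If a point is interior to a nondegenerate triangle, all its barycentric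
coefficients are positive. -/
lemma bary_pos {A B C y : Pt} (hncol : ¬ Collinear ℝ ({A, B, C} : Set Pt))
    (hyi : y ∈ interior (convexHull ℝ ({A, B, C} : Set Pt)))
    {p₁ p₂ p₃ : ℝ} (h1 : 0 ≤ p₁) (h2 : 0 ≤ p₂) (h3 : 0 ≤ p₃)
    (hsum : p₁ + p₂ + p₃ = 1) (hc : p₁ • A + p₂ • B + p₃ • C = y) :
    0 < p₁ ∧ 0 < p₂ ∧ 0 < p₃ := by
  have hpermBCA : ({B, C, A} : Set Pt) = {A, B, C} := by
    ext t; simp only [Set.mem_insert_iff, Set.mem_singleton_iff]; tauto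
  have hpermCAB : ({C, A, B} : Set Pt) = {A, B, C} := by
    ext t; simp only [Set.mem_insert_iff, Set.mem_singleton_iff]; tauto
  have hpermACB : ({A, C, B} : Set Pt) = {A, B, C} := by
    ext t; simp only [Set.mem_insert_iff, Set.mem_singleton_iff]; tauto
  have hAni : A ∉ interior (convexHull ℝ ({A, B, C} : Set Pt)) :=
    vertex_not_interior hncol
  have hBni : B ∉ interior (convexHull ℝ ({A, B, C} : Set Pt)) := by
    rw [← hpermBCA]
    exact vertex_not_interior (by rwa [hpermBCA])
  have hCni : C ∉ interior (convexHull ℝ ({A, B, C} : Set Pt)) := by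
    rw [← hpermCAB]
    exact vertex_not_interior (by rwa [hpermCAB])
  have key : ∀ (X Y Z : Pt) (a b : ℝ), 0 ≤ a → 0 ≤ b → a + b = 1 →
      a • X + b • Y = y →
      X ∉ interior (convexHull ℝ ({A, B, C} : Set Pt)) →
      Y ∉ interior (convexHull ℝ ({A, B, C} : Set Pt)) →
      ({X, Y, Z} : Set Pt) = ({A, B, C} : Set Pt) →
      ¬ Collinear ℝ ({A, B, C} : Set Pt) → False := by
    intro X Y Z a b ha hb hab hcomb hXni hYni hsi hnc
    rcases eq_or_lt_of_le ha with ha0 | ha0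
    · apply hYni
      rw [show Y = y by rw [← hcomb, ← ha0, show b = 1 by linarith]; simp]
      exact hyi
    · rcases eq_or_lt_of_le hb with hb0 | hb0
      · apply hXni
        rw [show X = y by rw [← hcomb, ← hb0, show a = 1 by linarith]; simp]
        exact hyi
      · have hyseg : y ∈ openSegment ℝ X Y := ⟨a, b, ha0, hb0, hab, hcomb⟩
        have := openSegment_not_interior (A := X) (B := Y) (C := Z)
          (by rwa [hsi]) hyseg
        rw [hsi] at this
        exact this hyi
  refine ⟨?_, ?_, ?_⟩
  · rcases eq_or_lt_of_le h1 with h0 | h0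
    · exfalso
      apply key B C A p₂ p₃ h2 h3 (by linarith) ?_ hBni hCni hpermBCA hncol
      rw [← hc, ← h0]; simp
    · exact h0
  · rcases eq_or_lt_of_le h2 with h0 | h0
    · exfalso
      apply key A C B p₁ p₃ h1 h3 (by linarith) ?_ hAni hCni hpermACB hncol
      rw [← hc, ← h0]; simp
    · exact h0
  · rcases eq_or_lt_of_le h3 with h0 | h0
    · exfalso
      apply key A B C p₁ p₂ h1 h2 (by linarith) ?_ hAni hBni rfl hncol
      rw [← hc, ← h0]; simp
    · exact h0

/-- Membership construction from coefficient inequalities. -/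
lemma mem_hull_coeff {X Y M yy zz : Pt} {pX pY pM qX qY qM : ℝ}
    (hqM : 0 < qM) (hpM : 0 ≤ pM)
    (hA1 : pM * qX ≤ pX * qM) (hA2 : pM * qY ≤ pY * qM)
    (hpsum : pX + pY + pM = 1) (hqsum : qX + qY + qM = 1)
    (hy : pX • X + pY • Y + pM • M = yy)
    (hz : qX • X + qY • Y + qM • M = zz) :
    yy ∈ convexHull ℝ ({X, Y, zz} : Set Pt) := by
  set g : ℝ := pM / qM with hg
  set A : ℝ := pX - g * qX with hA
  set C : ℝ := pY - g * qY with hC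
  have hg0 : 0 ≤ g := div_nonneg hpM (le_of_lt hqM)
  have hA0 : 0 ≤ A := by
    rw [hA, sub_nonneg, hg, div_mul_eq_mul_div, div_le_iff₀ hqM]
    linarith
  have hC0 : 0 ≤ C := by
    rw [hC, sub_nonneg, hg, div_mul_eq_mul_div, div_le_iff₀ hqM]
    linarith
  have hsum : A + C + g = 1 := by
    rw [hA, hC, hg]
    field_simp
    linear_combination qM * hpsum - pM * hqsum
  have hy1 : pX * X.1 + pY * Y.1 + pM * M.1 = yy.1 := by
    have := congrArg Prod.fst hy
    simpa [Prod.smul_fst, smul_eq_mul] using this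
  have hy2 : pX * X.2 + pY * Y.2 + pM * M.2 = yy.2 := by
    have := congrArg Prod.snd hy
    simpa [Prod.smul_snd, smul_eq_mul] using this
  have hz1 : qX * X.1 + qY * Y.1 + qM * M.1 = zz.1 := by
    have := congrArg Prod.fst hz
    simpa [Prod.smul_fst, smul_eq_mul] using this
  have hz2 : qX * X.2 + qY * Y.2 + qM * M.2 = zz.2 := by
    have := congrArg Prod.snd hz
    simpa [Prod.smul_snd, smul_eq_mul] using this
  have hcombo : A • X + C • Y + g • zz = yy := by
    rw [Prod.ext_iff]
    simp only [Prod.smul_fst, Prod.smul_snd, Prod.fst_add, Prod.snd_add, smul_eq_mul]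
    rw [hA, hC, hg]
    constructor
    · field_simp
      linear_combination qM * hy1 - pM * hz1
    · field_simp
      linear_combination qM * hy2 - pM * hz2
  rw [← hcombo]
  exact combo3_mem hA0 hC0 hg0 hsum

/-- Two distinct interior points of a triangle cannot both avoid the four hulls. -/
lemma lemmaA {v u w y z : Pt} (hncol : ¬ Collinear ℝ ({v, u, w} : Set Pt))
    (hyi : y ∈ interior (convexHull ℝ ({v, u, w} : Set Pt)))
    (hzi : z ∈ interior (convexHull ℝ ({v, u, w} : Set Pt)))
    (h1 : y ∉ convexHull ℝ ({v, w, z} : Set Pt))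
    (h2 : y ∉ convexHull ℝ ({v, u, z} : Set Pt))
    (h3 : z ∉ convexHull ℝ ({v, w, y} : Set Pt))
    (h4 : z ∉ convexHull ℝ ({v, u, y} : Set Pt)) : False := by
  obtain ⟨p₁, p₂, p₃, hp₁, hp₂, hp₃, hps, hpc⟩ := bary_exists (interior_subset hyi)
  obtain ⟨q₁, q₂, q₃, hq₁, hq₂, hq₃, hqs, hqc⟩ := bary_exists (interior_subset hzi)
  obtain ⟨hp₁', hp₂', hp₃'⟩ := bary_pos hncol hyi hp₁ hp₂ hp₃ hps hpc
  obtain ⟨hq₁', hq₂', hq₃'⟩ := bary_pos hncol hzi hq₁ hq₂ hq₃ hqs hqc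
  have hpc' : p₁ • v + p₃ • w + p₂ • u = y := by rw [← hpc]; abel
  have hqc' : q₁ • v + q₃ • w + q₂ • u = z := by rw [← hqc]; abel
  have K1 : p₁ * q₂ < p₂ * q₁ ∨ p₃ * q₂ < p₂ * q₃ := by
    by_contra hK
    push_neg at hK
    exact h1 (mem_hull_coeff hq₂' hp₂ hK.1 hK.2 (by linarith) (by linarith) hpc' hqc')
  have K2 : p₁ * q₃ < p₃ * q₁ ∨ p₂ * q₃ < p₃ * q₂ := by
    by_contra hK
    push_neg at hK
    exact h2 (mem_hull_coeff hq₃' hp₃ hK.1 hK.2 (by linarith) (by linarith) hpc hqc)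
  have K3 : q₁ * p₂ < q₂ * p₁ ∨ q₃ * p₂ < q₂ * p₃ := by
    by_contra hK
    push_neg at hK
    exact h3 (mem_hull_coeff hp₂' hq₂ hK.1 hK.2 (by linarith) (by linarith) hqc' hpc')
  have K4 : q₁ * p₃ < q₃ * p₁ ∨ q₂ * p₃ < q₃ * p₂ := by
    by_contra hK
    push_neg at hK
    exact h4 (mem_hull_coeff hp₃' hq₃ hK.1 hK.2 (by linarith) (by linarith) hqc hpc)
  have hiden : q₁ * (p₂ * q₃ - p₃ * q₂) + q₂ * (p₃ * q₁ - p₁ * q₃) +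
      q₃ * (p₁ * q₂ - p₂ * q₁) = 0 := by ring
  rcases le_or_gt (p₂ * q₃ - p₃ * q₂) 0 with hD1 | hD1
  · have hD3 : p₁ * q₂ - p₂ * q₁ < 0 := by
      rcases K1 with h | h
      · linarith
      · linarith
    have hD2 : p₃ * q₁ - p₁ * q₃ < 0 := by
      rcases K4 with h | h
      · linarith
      · linarith
    have t1 : q₁ * (p₂ * q₃ - p₃ * q₂) ≤ 0 :=
      mul_nonpos_of_nonneg_of_nonpos (le_of_lt hq₁') hD1
    have t2 : q₂ * (p₃ * q₁ - p₁ * q₃) < 0 := mul_neg_of_pos_of_neg hq₂' hD2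
    have t3 : q₃ * (p₁ * q₂ - p₂ * q₁) < 0 := mul_neg_of_pos_of_neg hq₃' hD3
    linarith
  · have hD3 : 0 < p₁ * q₂ - p₂ * q₁ := by
      rcases K3 with h | h
      · linarith
      · linarith
    have hD2 : 0 < p₃ * q₁ - p₁ * q₃ := by
      rcases K2 with h | h
      · linarith
      · linarith
    have t1 : 0 < q₁ * (p₂ * q₃ - p₃ * q₂) := mul_pos hq₁' hD1
    have t2 : 0 < q₂ * (p₃ * q₁ - p₁ * q₃) := mul_pos hq₂' hD2
    have t3 : 0 < q₃ * (p₁ * q₂ - p₂ * q₁) := mul_pos hq₃' hD3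
    linarith


lemma crosses_comm {a b c d : Pt} (h : Crosses a b c d) : Crosses c d a b := by
  obtain ⟨x, h1, h2, h3⟩ := h
  exact ⟨x, h2, h1, fun hu => h3 ⟨hu.2, hu.1⟩⟩

lemma crosses_swap_left {a b c d : Pt} (h : Crosses a b c d) : Crosses b a c d := by
  obtain ⟨x, h1, h2, h3⟩ := h
  rw [segment_symm] at h1
  exact ⟨x, h1, h2, fun hu => h3 ⟨Or.symm hu.1, hu.2⟩⟩

/-- Main engine: in any triangulation, the hull vertex `v` is joined to any internal
point `x` that is extreme in the hull of `P` minus `v`. -/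
lemma key (P : Finset Pt) (v u w : Pt) (hvP : v ∈ P) (huP : u ∈ P) (hwP : w ∈ P)
    (hvu : v ≠ u) (hvw : v ≠ w) (huw : u ≠ w)
    (htriV : ¬ Collinear ℝ ({v, u, w} : Set Pt))
    (hhull : convexHull ℝ (P : Set Pt) = convexHull ℝ ({v, u, w} : Set Pt))
    (x y z : Pt) (hxy : x ≠ y) (hyz : y ≠ z) (hxz : x ≠ z)
    (hint3 : {t : Pt | InternalPoint P t} = {x, y, z})
    (hseesu : ({t ∈ ({x, y, z} : Set Pt) |
        t ∈ Set.extremePoints ℝ (convexHull ℝ ((P.erase u : Finset Pt) : Set Pt))}).ncard = 2)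
    (hseesw : ({t ∈ ({x, y, z} : Set Pt) |
        t ∈ Set.extremePoints ℝ (convexHull ℝ ((P.erase w : Finset Pt) : Set Pt))}).ncard = 2)
    (hxe : x ∈ Set.extremePoints ℝ (convexHull ℝ ((P.erase v : Finset Pt) : Set Pt)))
    (T : Set (Sym2 Pt)) (hT : IsTriangulation P T) : s(v, x) ∈ T := by
  obtain ⟨⟨hTmem, hTcross⟩, hTmax⟩ := hT
  have hintmem : ∀ t ∈ ({x, y, z} : Set Pt), InternalPoint P t := by
    intro t ht
    rw [← hint3] at ht
    exact ht
  have hxP : x ∈ P := (hintmem x (by simp)).1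
  have hyP : y ∈ P := (hintmem y (by simp)).1
  have hzP : z ∈ P := (hintmem z (by simp)).1
  have hxI : x ∈ interior (convexHull ℝ (P : Set Pt)) := (hintmem x (by simp)).2
  have hyI : y ∈ interior (convexHull ℝ (P : Set Pt)) := (hintmem y (by simp)).2
  have hzI : z ∈ interior (convexHull ℝ (P : Set Pt)) := (hintmem z (by simp)).2
  have hperm1 : ({u, w, v} : Set Pt) = {v, u, w} := by
    ext t; simp only [Set.mem_insert_iff, Set.mem_singleton_iff]; tauto
  have hperm2 : ({w, v, u} : Set Pt) = {v, u, w} := by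
    ext t; simp only [Set.mem_insert_iff, Set.mem_singleton_iff]; tauto
  have hperm3 : ({v, w, u} : Set Pt) = {v, u, w} := by
    ext t; simp only [Set.mem_insert_iff, Set.mem_singleton_iff]; tauto
  have hVni : ∀ t ∈ ({v, u, w} : Set Pt), t ∉ interior (convexHull ℝ (P : Set Pt)) := by
    intro t ht
    rw [hhull]
    rcases ht with h | h | h
    · rw [h]; exact vertex_not_interior htriV
    · rw [h, ← hperm1]
      exact vertex_not_interior (by rwa [hperm1])
    · rw [h, ← hperm2]
      exact vertex_not_interior (by rwa [hperm2])
  have hxv : x ≠ v := fun h => hVni v (by simp) (h ▸ hxI)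
  have hyv : y ≠ v := fun h => hVni v (by simp) (h ▸ hyI)
  have hzv : z ≠ v := fun h => hVni v (by simp) (h ▸ hzI)
  have hyu : y ≠ u := fun h => hVni u (by simp) (h ▸ hyI)
  have hzu : z ≠ u := fun h => hVni u (by simp) (h ▸ hzI)
  have hyw : y ≠ w := fun h => hVni w (by simp) (h ▸ hyI)
  have hzw : z ≠ w := fun h => hVni w (by simp) (h ▸ hzI)
  have hPins : (P : Set Pt) = insert v ((P.erase v : Finset Pt) : Set Pt) := by
    rw [← Finset.coe_insert, Finset.insert_erase hvP]
  have hSne : ((P.erase v : Finset Pt) : Set Pt).Nonempty :=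
    ⟨u, Finset.mem_coe.2 (Finset.mem_erase.2 ⟨hvu.symm, huP⟩)⟩
  have hxIns : x ∈ interior (convexHull ℝ (insert v ((P.erase v : Finset Pt) : Set Pt))) := by
    rw [← hPins]; exact hxI
  have hvis := visible hSne hxIns hxe hxv
  -- x is not strictly between v and any other point of P
  have hnb : ∀ q ∈ P, q ≠ v → x ∉ openSegment ℝ v q := by
    intro q hqP hqv hopen
    by_cases hqu : q = u
    · rw [hqu] at hopen
      rw [hhull] at hxI
      exact openSegment_not_interior htriV hopen hxI
    · by_cases hqw : q = w
      · rw [hqw] at hopen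
        rw [hhull, ← hperm3] at hxI
        exact openSegment_not_interior (by rwa [hperm3]) hopen hxI
      · -- q is not a hull vertex : x is not extreme in K_u nor K_w
        have hxnot : ∀ r : Pt, r ≠ v → r ≠ q →
            x ∉ Set.extremePoints ℝ (convexHull ℝ ((P.erase r : Finset Pt) : Set Pt)) := by
          intro r hrv hrq hext
          have hvm : v ∈ convexHull ℝ ((P.erase r : Finset Pt) : Set Pt) :=
            subset_convexHull ℝ _ (Finset.mem_coe.2 (Finset.mem_erase.2 ⟨hrv.symm, hvP⟩))
          have hqm : q ∈ convexHull ℝ ((P.erase r : Finset Pt) : Set Pt) :=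
            subset_convexHull ℝ _ (Finset.mem_coe.2 (Finset.mem_erase.2 ⟨fun h => hrq h.symm, hqP⟩))
          rw [mem_extremePoints] at hext
          exact hxv ((hext.2 v hvm q hqm hopen).1).symm
        have hxnotu := hxnot u (fun h => hvu h.symm) (fun h => hqu h.symm)
        have hxnotw := hxnot w (fun h => hvw h.symm) (fun h => hqw h.symm)
        have extract : ∀ r : Pt,
            ({t ∈ ({x, y, z} : Set Pt) |
              t ∈ Set.extremePoints ℝ (convexHull ℝ ((P.erase r : Finset Pt) : Set Pt))}).ncard = 2 →
            x ∉ Set.extremePoints ℝ (convexHull ℝ ((P.erase r : Finset Pt) : Set Pt)) →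
            y ∈ Set.extremePoints ℝ (convexHull ℝ ((P.erase r : Finset Pt) : Set Pt)) ∧
            z ∈ Set.extremePoints ℝ (convexHull ℝ ((P.erase r : Finset Pt) : Set Pt)) := by
          intro r hcard hxnotr
          have hsub : {t ∈ ({x, y, z} : Set Pt) |
              t ∈ Set.extremePoints ℝ (convexHull ℝ ((P.erase r : Finset Pt) : Set Pt))} ⊆
              ({y, z} : Set Pt) := by
            rintro t ⟨ht1, ht2⟩
            simp only [Set.mem_insert_iff, Set.mem_singleton_iff] at ht1 ⊢
            rcases ht1 with h | h | h
            · exact absurd (h ▸ ht2) hxnotr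
            · exact Or.inl h
            · exact Or.inr h
          have hfin : ({y, z} : Set Pt).Finite := (Set.finite_singleton z).insert y
          have hc2 : ({y, z} : Set Pt).ncard = 2 := Set.ncard_pair hyz
          have heq := Set.eq_of_subset_of_ncard_le hsub (by rw [hc2, hcard]) hfin
          constructor
          · have hm : y ∈ ({y, z} : Set Pt) := by simp
            rw [← heq] at hm
            exact hm.2
          · have hm : z ∈ ({y, z} : Set Pt) := by simp
            rw [← heq] at hm
            exact hm.2
        obtain ⟨hyEu, hzEu⟩ := extract u hseesu hxnotu
        obtain ⟨hyEw, hzEw⟩ := extract w hseesw hxnotw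
        have hyIvuw : y ∈ interior (convexHull ℝ ({v, u, w} : Set Pt)) := by
          rw [← hhull]; exact hyI
        have hzIvuw : z ∈ interior (convexHull ℝ ({v, u, w} : Set Pt)) := by
          rw [← hhull]; exact hzI
        have hmemv_u : v ∈ ((P.erase u : Finset Pt) : Set Pt) :=
          Finset.mem_coe.2 (Finset.mem_erase.2 ⟨hvu, hvP⟩)
        have hmemw_u : w ∈ ((P.erase u : Finset Pt) : Set Pt) :=
          Finset.mem_coe.2 (Finset.mem_erase.2 ⟨huw.symm, hwP⟩)
        have hmemy_u : y ∈ ((P.erase u : Finset Pt) : Set Pt) :=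
          Finset.mem_coe.2 (Finset.mem_erase.2 ⟨hyu, hyP⟩)
        have hmemz_u : z ∈ ((P.erase u : Finset Pt) : Set Pt) :=
          Finset.mem_coe.2 (Finset.mem_erase.2 ⟨hzu, hzP⟩)
        have hmemv_w : v ∈ ((P.erase w : Finset Pt) : Set Pt) :=
          Finset.mem_coe.2 (Finset.mem_erase.2 ⟨hvw, hvP⟩)
        have hmemu_w : u ∈ ((P.erase w : Finset Pt) : Set Pt) :=
          Finset.mem_coe.2 (Finset.mem_erase.2 ⟨huw, huP⟩)
        have hmemy_w : y ∈ ((P.erase w : Finset Pt) : Set Pt) :=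
          Finset.mem_coe.2 (Finset.mem_erase.2 ⟨hyw, hyP⟩)
        have hmemz_w : z ∈ ((P.erase w : Finset Pt) : Set Pt) :=
          Finset.mem_coe.2 (Finset.mem_erase.2 ⟨hzw, hzP⟩)
        have m1 : y ∉ convexHull ℝ ({v, w, z} : Set Pt) :=
          extreme_notin_hull3 hyEu hmemv_u hmemw_u hmemz_u hyv.symm hyw.symm hyz.symm
        have m2 : y ∉ convexHull ℝ ({v, u, z} : Set Pt) :=
          extreme_notin_hull3 hyEw hmemv_w hmemu_w hmemz_w hyv.symm hyu.symm hyz.symm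
        have m3 : z ∉ convexHull ℝ ({v, w, y} : Set Pt) :=
          extreme_notin_hull3 hzEu hmemv_u hmemw_u hmemy_u hzv.symm hzw.symm hyz
        have m4 : z ∉ convexHull ℝ ({v, u, y} : Set Pt) :=
          extreme_notin_hull3 hzEw hmemv_w hmemu_w hmemy_w hzv.symm hzu.symm hyz
        exact lemmaA htriV hyIvuw hzIvuw m1 m2 m3 m4
  -- endpoints of triangulation edges
  have hend : ∀ p q : Pt, s(p, q) ∈ T → p ∈ P ∧ q ∈ P ∧ p ≠ q := by
    intro p q h
    obtain ⟨a', b', ha', hb', hne', heq⟩ := hTmem _ h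
    rw [Sym2.eq_iff] at heq
    rcases heq with ⟨h1, h2⟩ | ⟨h1, h2⟩
    · exact ⟨h1 ▸ ha', h2 ▸ hb', fun hc => hne' (h1 ▸ h2 ▸ hc)⟩
    · exact ⟨h1 ▸ hb', h2 ▸ ha', fun hc => (hne' (h2 ▸ h1 ▸ hc.symm))⟩
  -- the segment [v,x] crosses no segment of T
  have caseB : ∀ q' : Pt, q' ∈ P → q' ≠ v → q' ≠ x → ∀ zz : Pt,
      zz ∈ segment ℝ v x → zz ∈ segment ℝ v q' →
      ¬((zz = v ∨ zz = x) ∧ (zz = v ∨ zz = q')) → False := by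
    intro q' hq'P hq'v hq'x zz hz1 hz2 hz3
    by_cases hzv : zz = v
    · exact hz3 ⟨Or.inl hzv, Or.inl hzv⟩
    · obtain ⟨a₁, b₁, ha₁, hb₁, hab₁, he₁⟩ := hz1
      obtain ⟨a₂, b₂, ha₂, hb₂, hab₂, he₂⟩ := hz2
      have hb₁pos : 0 < b₁ := by
        rcases eq_or_lt_of_le hb₁ with h0 | h0
        · exfalso
          apply hzv
          rw [← he₁, ← h0, show a₁ = 1 by linarith]
          simp
        · exact h0
      have hb₂pos : 0 < b₂ := by
        rcases eq_or_lt_of_le hb₂ with h0 | h0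
        · exfalso
          apply hzv
          rw [← he₂, ← h0, show a₂ = 1 by linarith]
          simp
        · exact h0
      have e11 : a₁ * v.1 + b₁ * x.1 = zz.1 := by
        have := congrArg Prod.fst he₁
        simpa [Prod.smul_fst, smul_eq_mul] using this
      have e12 : a₁ * v.2 + b₁ * x.2 = zz.2 := by
        have := congrArg Prod.snd he₁
        simpa [Prod.smul_snd, smul_eq_mul] using this
      have e21 : a₂ * v.1 + b₂ * q'.1 = zz.1 := by
        have := congrArg Prod.fst he₂
        simpa [Prod.smul_fst, smul_eq_mul] using this
      have e22 : a₂ * v.2 + b₂ * q'.2 = zz.2 := by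
        have := congrArg Prod.snd he₂
        simpa [Prod.smul_snd, smul_eq_mul] using this
      rcases le_or_gt b₁ b₂ with hle | hlt
      · -- q' lies on [v,x], inside the hull of P.erase v : contradiction with q' ≠ x
        have hq'K : q' ∈ convexHull ℝ ((P.erase v : Finset Pt) : Set Pt) :=
          subset_convexHull ℝ _ (Finset.mem_coe.2 (Finset.mem_erase.2 ⟨hq'v, hq'P⟩))
        have hdiv1 : (0:ℝ) ≤ b₁ / b₂ := by positivity
        have hdiv2 : b₁ / b₂ ≤ 1 := (div_le_one hb₂pos).2 hle
        have hq'seg : q' ∈ segment ℝ v x := by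
          refine ⟨1 - b₁ / b₂, b₁ / b₂, by linarith, hdiv1, by ring, ?_⟩
          rw [Prod.ext_iff]
          simp only [Prod.smul_fst, Prod.smul_snd, Prod.fst_add, Prod.snd_add, smul_eq_mul]
          constructor
          · field_simp
            linear_combination e11 - e21 + v.1 * hab₂ - v.1 * hab₁
          · field_simp
            linear_combination e12 - e22 + v.2 * hab₂ - v.2 * hab₁
        exact hq'x (hvis q' hq'K hq'seg)
      · -- x strictly between v and q' : contradiction with hnb
        apply hnb q' hq'P hq'v
        have hlt1 : b₂ / b₁ < 1 := (div_lt_one hb₁pos).2 hlt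
        refine ⟨1 - b₂ / b₁, b₂ / b₁, by linarith, by positivity, by ring, ?_⟩
        rw [Prod.ext_iff]
        simp only [Prod.smul_fst, Prod.smul_snd, Prod.fst_add, Prod.snd_add, smul_eq_mul]
        constructor
        · field_simp
          linear_combination e21 - e11 + v.1 * hab₁ - v.1 * hab₂
        · field_simp
          linear_combination e22 - e12 + v.2 * hab₁ - v.2 * hab₂
  have hnc : ∀ p q : Pt, s(p, q) ∈ T → s(p, q) ≠ s(v, x) → ¬ Crosses v x p q := by
    intro p q hpqT hne hcr
    obtain ⟨zz, hz1, hz2, hz3⟩ := hcr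
    obtain ⟨hpP, hqP, hpq⟩ := hend p q hpqT
    by_cases hpv : p = v
    · have hqv : q ≠ v := fun h => hpq (hpv.trans h.symm)
      have hqx : q ≠ x := fun h => hne (by rw [hpv, h])
      rw [hpv] at hz2 hz3
      exact caseB q hqP hqv hqx zz hz1 hz2 hz3
    · by_cases hqv : q = v
      · have hpx : p ≠ x := fun h => hne (by rw [hqv, h, Sym2.eq_swap])
        rw [hqv] at hz2 hz3
        rw [segment_symm] at hz2
        exact caseB p hpP hpv hpx zz hz1 hz2
          (fun hu => hz3 ⟨hu.1, Or.symm hu.2⟩)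
      · -- neither endpoint is v
        have hpK : p ∈ convexHull ℝ ((P.erase v : Finset Pt) : Set Pt) :=
          subset_convexHull ℝ _ (Finset.mem_coe.2 (Finset.mem_erase.2 ⟨hpv, hpP⟩))
        have hqK : q ∈ convexHull ℝ ((P.erase v : Finset Pt) : Set Pt) :=
          subset_convexHull ℝ _ (Finset.mem_coe.2 (Finset.mem_erase.2 ⟨hqv, hqP⟩))
        have hzzK : zz ∈ convexHull ℝ ((P.erase v : Finset Pt) : Set Pt) :=
          segment_subset_convexHull (Finset.mem_coe.2 (Finset.mem_erase.2 ⟨hpv, hpP⟩))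
            (Finset.mem_coe.2 (Finset.mem_erase.2 ⟨hqv, hqP⟩)) hz2
        have hzx : zz = x := hvis zz hzzK hz1
        have h4 : ¬(zz = p ∨ zz = q) := fun h => hz3 ⟨Or.inr hzx, h⟩
        push_neg at h4
        rw [hzx] at hz2 h4
        have hopen : x ∈ openSegment ℝ p q :=
          mem_openSegment_of_ne_left_right (fun h => h4.1 h.symm) (fun h => h4.2 h.symm) hz2
        rw [mem_extremePoints] at hxe
        exact h4.1 ((hxe.2 p hpK q hqK hopen).1).symm
  -- maximality
  have hvx' : v ≠ x := fun h => hxv h.symm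
  have hvalid' : ValidSegs P (insert (s(v, x)) T) := by
    constructor
    · intro e he
      rcases Set.mem_insert_iff.1 he with he | he
      · exact ⟨v, x, hvP, hxP, hvx', he⟩
      · exact hTmem e he
    · intro p q r t hpq hrt hne
      rcases Set.mem_insert_iff.1 hpq with h1 | h1 <;>
        rcases Set.mem_insert_iff.1 hrt with h2 | h2
      · exact absurd (h1.trans h2.symm) hne
      · have hne2 : s(r, t) ≠ s(v, x) := fun h => hne (h1.trans h.symm)
        have hnc' := hnc r t h2 hne2
        rcases Sym2.eq_iff.1 h1 with ⟨hp', hq'⟩ | ⟨hp', hq'⟩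
        · rw [hp', hq']; exact hnc'
        · rw [hp', hq']
          exact fun hc => hnc' (crosses_swap_left hc)
      · have hne2 : s(p, q) ≠ s(v, x) := fun h => hne (h.trans h2.symm)
        have hnc' := hnc p q h1 hne2
        rcases Sym2.eq_iff.1 h2 with ⟨hr', ht'⟩ | ⟨hr', ht'⟩
        · rw [hr', ht']
          exact fun hc => hnc' (crosses_comm hc)
        · rw [hr', ht']
          exact fun hc => hnc' (crosses_swap_left (crosses_comm hc))
      · exact hTcross p q r t h1 h2 hne
  have hTeq := hTmax _ hvalid' (Set.subset_insert _ _)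
  rw [← hTeq]
  exact Set.mem_insert _ _

end Aux14

set_option maxHeartbeats 2000000 in
/-- If the hull of `P` is a triangle `v₁v₂v₃` and `P` has exactly 3 internal
points `a,b,c` spanning an empty triangle, each hull vertex seeing exactly two of them as
extreme points of the hull of the remaining points, then every triangulation joins each
hull vertex to the two internal points it sees. -/
theorem stmt14 (P : Finset Pt) (hP : ¬ Collinear ℝ (P : Set Pt))
    (v₁ v₂ v₃ : Pt) (hv₁ : v₁ ∈ P) (hv₂ : v₂ ∈ P) (hv₃ : v₃ ∈ P)
    (hvne : v₁ ≠ v₂ ∧ v₂ ≠ v₃ ∧ v₁ ≠ v₃)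
    (hvtri : ¬ Collinear ℝ ({v₁, v₂, v₃} : Set Pt))
    (hhull : convexHull ℝ (P : Set Pt) = convexHull ℝ ({v₁, v₂, v₃} : Set Pt))
    (a b c : Pt) (habc : a ≠ b ∧ b ≠ c ∧ a ≠ c)
    (hint : {x : Pt | InternalPoint P x} = {a, b, c})
    (htri : ¬ Collinear ℝ ({a, b, c} : Set Pt))
    (hempty : ∀ p ∈ P, p ∈ convexHull ℝ ({a, b, c} : Set Pt) → p ∈ ({a, b, c} : Set Pt))
    (hsees : ∀ v ∈ ({v₁, v₂, v₃} : Set Pt),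
      ({x ∈ ({a, b, c} : Set Pt) |
        x ∈ Set.extremePoints ℝ (convexHull ℝ ((P.erase v : Finset Pt) : Set Pt))}).ncard = 2) :
    ∀ T : Set (Sym2 Pt), IsTriangulation P T →
      ∀ v ∈ ({v₁, v₂, v₃} : Set Pt), ∀ x ∈ ({a, b, c} : Set Pt),
        x ∈ Set.extremePoints ℝ (convexHull ℝ ((P.erase v : Finset Pt) : Set Pt)) →
          s(v, x) ∈ T := by
  intro T hT v hv x hx hxe
  obtain ⟨hv12, hv23, hv13⟩ := hvne
  obtain ⟨hab, hbc, hac⟩ := habc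
  simp only [Set.mem_insert_iff, Set.mem_singleton_iff] at hv hx
  have S2 : ({v₂, v₁, v₃} : Set Pt) = {v₁, v₂, v₃} := by
    ext t; simp only [Set.mem_insert_iff, Set.mem_singleton_iff]; tauto
  have S3 : ({v₃, v₁, v₂} : Set Pt) = {v₁, v₂, v₃} := by
    ext t; simp only [Set.mem_insert_iff, Set.mem_singleton_iff]; tauto
  have Sxb : ({b, a, c} : Set Pt) = {a, b, c} := by
    ext t; simp only [Set.mem_insert_iff, Set.mem_singleton_iff]; tauto
  have Sxc : ({c, a, b} : Set Pt) = {a, b, c} := by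
    ext t; simp only [Set.mem_insert_iff, Set.mem_singleton_iff]; tauto
  rcases hv with h | h | h <;> rw [h] at hxe ⊢ <;>
    rcases hx with h' | h' | h' <;> rw [h'] at hxe ⊢
  · exact Aux14.key P v₁ v₂ v₃ hv₁ hv₂ hv₃ hv12 hv13 hv23 hvtri hhull a b c hab hbc hac
      hint (hsees v₂ (by simp)) (hsees v₃ (by simp)) hxe T hT
  · exact Aux14.key P v₁ v₂ v₃ hv₁ hv₂ hv₃ hv12 hv13 hv23 hvtri hhull b a c hab.symm hac hbc
      (hint.trans Sxb.symm) (by rw [Sxb]; exact hsees v₂ (by simp))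
      (by rw [Sxb]; exact hsees v₃ (by simp)) hxe T hT
  · exact Aux14.key P v₁ v₂ v₃ hv₁ hv₂ hv₃ hv12 hv13 hv23 hvtri hhull c a b hac.symm hab hbc.symm
      (hint.trans Sxc.symm) (by rw [Sxc]; exact hsees v₂ (by simp))
      (by rw [Sxc]; exact hsees v₃ (by simp)) hxe T hT
  · exact Aux14.key P v₂ v₁ v₃ hv₂ hv₁ hv₃ hv12.symm hv23 hv13 (by rw [S2]; exact hvtri)
      (by rw [hhull, S2]) a b c hab hbc hac
      hint (hsees v₁ (by simp)) (hsees v₃ (by simp)) hxe T hT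
  · exact Aux14.key P v₂ v₁ v₃ hv₂ hv₁ hv₃ hv12.symm hv23 hv13 (by rw [S2]; exact hvtri)
      (by rw [hhull, S2]) b a c hab.symm hac hbc
      (hint.trans Sxb.symm) (by rw [Sxb]; exact hsees v₁ (by simp))
      (by rw [Sxb]; exact hsees v₃ (by simp)) hxe T hT
  · exact Aux14.key P v₂ v₁ v₃ hv₂ hv₁ hv₃ hv12.symm hv23 hv13 (by rw [S2]; exact hvtri)
      (by rw [hhull, S2]) c a b hac.symm hab hbc.symm
      (hint.trans Sxc.symm) (by rw [Sxc]; exact hsees v₁ (by simp))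
      (by rw [Sxc]; exact hsees v₃ (by simp)) hxe T hT
  · exact Aux14.key P v₃ v₁ v₂ hv₃ hv₁ hv₂ hv13.symm hv23.symm hv12 (by rw [S3]; exact hvtri)
      (by rw [hhull, S3]) a b c hab hbc hac
      hint (hsees v₁ (by simp)) (hsees v₂ (by simp)) hxe T hT
  · exact Aux14.key P v₃ v₁ v₂ hv₃ hv₁ hv₂ hv13.symm hv23.symm hv12 (by rw [S3]; exact hvtri)
      (by rw [hhull, S3]) b a c hab.symm hac hbc
      (hint.trans Sxb.symm) (by rw [Sxb]; exact hsees v₁ (by simp))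
      (by rw [Sxb]; exact hsees v₂ (by simp)) hxe T hT
  · exact Aux14.key P v₃ v₁ v₂ hv₃ hv₁ hv₂ hv13.symm hv23.symm hv12 (by rw [S3]; exact hvtri)
      (by rw [hhull, S3]) c a b hac.symm hab hbc.symm
      (hint.trans Sxc.symm) (by rw [Sxc]; exact hsees v₁ (by simp))
      (by rw [Sxc]; exact hsees v₂ (by simp)) hxe T hT
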